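/- If {A,B} is a minimum (respectively maximum) bisection whose organized partition satisfies D_C = 0, then there exists another bisection {R,S} ≠ {A,B} with E(R,S) = E(A,B); i.e., the minimum (maximum) bisection is not unique. -/
import Mathlib


open Finset

/-- Number of edges of `G` with one endpoint in `X` and the other in `Y`
(for disjoint `X`, `Y`). -/
def EC {V : Type*} [Fintype V] [DecidableEq V] (G : SimpleGraph V)
    [DecidableRel G.Adj] (X Y : Finset V) : ℕ :=
  ((X ×ˢ Y).filter (fun p => G.Adj p.1 p.2)).card

/-- `{R, S}` is a bisection of the vertex set. -/
def IsBisection {V : Type*} [Fintype V] [DecidableEq V] (R S : Finset V) : Prop :=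
  R ∪ S = Finset.univ ∧ Disjoint R S ∧ R.card = S.card

lemma EC_comm {V : Type*} [Fintype V] [DecidableEq V] (G : SimpleGraph V)
    [DecidableRel G.Adj] (X Y : Finset V) : EC G X Y = EC G Y X := by
  unfold EC
  apply Finset.card_bij' (fun p _ => Prod.swap p) (fun p _ => Prod.swap p) <;>
    simp +contextual [Finset.mem_product, and_comm, G.adj_comm]

lemma EC_union_left {V : Type*} [Fintype V] [DecidableEq V] (G : SimpleGraph V)
    [DecidableRel G.Adj] {X Y : Finset V} (Z : Finset V) (h : Disjoint X Y) :
    EC G (X ∪ Y) Z = EC G X Z + EC G Y Z := by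
  unfold EC
  rw [Finset.union_product, Finset.filter_union]
  apply Finset.card_union_of_disjoint
  apply Finset.disjoint_filter_filter
  rw [Finset.disjoint_left]
  intro p hp hq
  rw [Finset.mem_product] at hp hq
  exact (Finset.disjoint_left.mp h) hp.1 hq.1

lemma EC_union_right {V : Type*} [Fintype V] [DecidableEq V] (G : SimpleGraph V)
    [DecidableRel G.Adj] {X Y : Finset V} (Z : Finset V) (h : Disjoint X Y) :
    EC G Z (X ∪ Y) = EC G Z X + EC G Z Y := by
  rw [EC_comm, EC_union_left G Z h, EC_comm, EC_comm G Y Z]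

theorem stmt8 {V : Type*} [Fintype V] [DecidableEq V] (G : SimpleGraph V)
    [DecidableRel G.Adj] (n : ℕ) (hn : 1 ≤ n) (A B A₁ A₂ B₁ B₂ : Finset V)
    (hconn : G.Connected)
    (hcard : Fintype.card V = 4 * n)
    (hbis : IsBisection A B) (hA2n : A.card = 2 * n)
    (hopt : (∀ R S : Finset V, IsBisection R S → EC G A B ≤ EC G R S) ∨
            (∀ R S : Finset V, IsBisection R S → EC G R S ≤ EC G A B))
    (hA : A = A₁ ∪ A₂) (hA12 : Disjoint A₁ A₂)
    (hB : B = B₁ ∪ B₂) (hB12 : Disjoint B₁ B₂)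
    (hA1 : A₁.card = n) (hA2 : A₂.card = n) (hB1 : B₁.card = n) (hB2 : B₂.card = n)
    (horg : ∀ A₁' A₂' B₁' B₂' : Finset V,
      A = A₁' ∪ A₂' → Disjoint A₁' A₂' → B = B₁' ∪ B₂' → Disjoint B₁' B₂' →
      A₁'.card = n → A₂'.card = n → B₁'.card = n → B₂'.card = n →
      (EC G A₁ A₂ + EC G B₁ B₂ : ℤ) - EC G A₁ B₁ - EC G A₂ B₂ ≤
        (EC G A₁' A₂' + EC G B₁' B₂' : ℤ) - EC G A₁' B₁' - EC G A₂' B₂')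
    (hDC : (EC G A₁ A₂ + EC G B₁ B₂ : ℤ) - EC G A₁ B₁ - EC G A₂ B₂ = 0) :
    ∃ R S : Finset V, IsBisection R S ∧ EC G R S = EC G A B ∧
      ¬((R = A ∧ S = B) ∨ (R = B ∧ S = A)) := by
  have hAB : Disjoint A B := hbis.2.1
  have hsA1 : A₁ ⊆ A := hA ▸ Finset.subset_union_left
  have hsA2 : A₂ ⊆ A := hA ▸ Finset.subset_union_right
  have hsB1 : B₁ ⊆ B := hB ▸ Finset.subset_union_left
  have hsB2 : B₂ ⊆ B := hB ▸ Finset.subset_union_right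
  have dA1B1 : Disjoint A₁ B₁ := hAB.mono hsA1 hsB1
  have dA1B2 : Disjoint A₁ B₂ := hAB.mono hsA1 hsB2
  have dA2B1 : Disjoint A₂ B₁ := hAB.mono hsA2 hsB1
  have dA2B2 : Disjoint A₂ B₂ := hAB.mono hsA2 hsB2
  refine ⟨A₁ ∪ B₁, A₂ ∪ B₂, ⟨?_, ?_, ?_⟩, ?_, ?_⟩
  · have : (A₁ ∪ B₁) ∪ (A₂ ∪ B₂) = (A₁ ∪ A₂) ∪ (B₁ ∪ B₂) := by
      ext x; simp; tauto
    rw [this, ← hA, ← hB, hbis.1]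
  · simp only [Finset.disjoint_union_left, Finset.disjoint_union_right]
    exact ⟨⟨hA12, dA2B1.symm⟩, dA1B2, hB12⟩
  · rw [Finset.card_union_of_disjoint dA1B1, Finset.card_union_of_disjoint dA2B2,
      hA1, hA2, hB1, hB2]
  · have hRS : EC G (A₁ ∪ B₁) (A₂ ∪ B₂) =
        EC G A₁ A₂ + EC G A₁ B₂ + (EC G B₁ A₂ + EC G B₁ B₂) := by
      rw [EC_union_left G _ dA1B1, EC_union_right G _ dA2B2, EC_union_right G _ dA2B2]
    have hABeq : EC G A B = EC G A₁ B₁ + EC G A₁ B₂ + (EC G A₂ B₁ + EC G A₂ B₂) := by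
      rw [hA, hB, EC_union_left G _ hA12, EC_union_right G _ hB12, EC_union_right G _ hB12]
    have hsym : EC G B₁ A₂ = EC G A₂ B₁ := EC_comm G B₁ A₂
    have hnat : EC G A₁ A₂ + EC G B₁ B₂ = EC G A₁ B₁ + EC G A₂ B₂ := by
      have := hDC; omega
    omega
  · have hA1ne : A₁.Nonempty := Finset.card_pos.mp (by omega)
    have hB1ne : B₁.Nonempty := Finset.card_pos.mp (by omega)
    rintro (⟨h, -⟩ | ⟨h, -⟩)
    · obtain ⟨x, hx⟩ := hB1ne
      have hxA : x ∈ A := h ▸ Finset.mem_union_right _ hx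
      exact (Finset.disjoint_left.mp hAB hxA) (hsB1 hx)
    · obtain ⟨x, hx⟩ := hA1ne
      have hxB : x ∈ B := h ▸ Finset.mem_union_left _ hx
      exact (Finset.disjoint_left.mp hAB (hsA1 hx)) hxB
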